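/- Flat base change inclusion: if R → A → B are ring morphisms and R' is a flat R-algebra, then the image of A*_{B,R} ⊗_R R' in B ⊗_R R' is contained in (A ⊗_R R')*_{B ⊗_R R', R'}. -/

import Mathlib

/-!
The kernel of `B ⊗[R] B → B ⊗[A] B` is generated by the elements `Δ a = a ⊗ 1 - 1 ⊗ a`
with `a ∈ A`. Hence a morphism from the tower `R → A → B` to a tower `R' → A' → B'`
carries that kernel into the corresponding one, and with it every equation of integral dependence of
`Δ x`: it maps `A*_{B,R}` into `A'*_{B',R'}`. The integral closure of an ideal `I` is an ideal,
since `x` is integral over `I` exactly when `x t` is integral over the Rees algebra `R[I t]`;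
so `A'*_{B',R'}` is an `R'`-submodule of `B'`, and it contains the generators
`x ⊗ y = y • (x ⊗ 1)` of the span.
-/

open TensorProduct

/-- Integral closure of an ideal: `x` satisfies an equation of integral dependence over `I`. -/
def Ideal.intClosure {S : Type*} [CommRing S] (I : Ideal S) : Set S :=
  {x | ∃ n : ℕ, 0 < n ∧ ∃ a : ℕ → S, (∀ i ∈ Finset.Icc 1 n, a i ∈ I ^ i) ∧
      x ^ n + ∑ i ∈ Finset.Icc 1 n, a i * x ^ (n - i) = 0}

theorem Finset.sum_Icc_one_sub_eq_sum_range {M : Type*} [AddCommMonoid M] (f : ℕ → M)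
    (n : ℕ) :
    ∑ i ∈ Finset.Icc 1 n, f (n - i) = ∑ j ∈ Finset.range n, f j := by
  refine Finset.sum_nbij' (n - ·) (n - ·) ?_ ?_ ?_ ?_ ?_ <;> intro i hi <;>
    simp only [Finset.mem_Icc, Finset.mem_range] at hi ⊢ <;> omega

namespace Ideal

open Polynomial

variable {S : Type*} [CommRing S] {I : Ideal S} {x : S}

theorem mem_intClosure_iff_exists_sum_range :
    x ∈ I.intClosure ↔ ∃ n, 0 < n ∧ ∃ c : ℕ → S, (∀ j < n, c j ∈ I ^ (n - j)) ∧
      x ^ n + ∑ j ∈ Finset.range n, c j * x ^ j = 0 := by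
  refine exists_congr fun n => and_congr_right fun _ => ⟨?_, ?_⟩
  · rintro ⟨a, ha, h⟩
    refine ⟨fun j => a (n - j), fun j _ => ha _ (Finset.mem_Icc.2 ⟨by omega, by omega⟩), ?_⟩
    rw [← Finset.sum_Icc_one_sub_eq_sum_range (fun j => a (n - j) * x ^ j), ← h]
    congr 1
    refine Finset.sum_congr rfl fun i hi => ?_
    rw [Nat.sub_sub_self (Finset.mem_Icc.1 hi).2]
  · rintro ⟨c, hc, h⟩
    refine ⟨fun i => c (n - i), fun i hi => ?_, ?_⟩
    · have := hc (n - i) (by simp only [Finset.mem_Icc] at hi; omega)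
      rwa [Nat.sub_sub_self (Finset.mem_Icc.1 hi).2] at this
    · rwa [Finset.sum_Icc_one_sub_eq_sum_range (fun j => c j * x ^ j)]

theorem isIntegral_monomial_one_of_mem_intClosure (hx : x ∈ I.intClosure) :
    IsIntegral (reesAlgebra I) (monomial 1 x) := by
  obtain ⟨n, -, c, hc, h⟩ := mem_intClosure_iff_exists_sum_range.1 hx
  let b : Fin n → reesAlgebra I := fun j =>
    ⟨monomial (n - j) (c j), reesAlgebra.monomial_mem.2 (hc j j.2)⟩
  refine ⟨X ^ n + ∑ j, C (b j) * X ^ (j : ℕ), monic_X_pow_add (degree_sum_fin_lt b), ?_⟩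
  have hterm : ∀ j : Fin n, aeval (monomial 1 x) (C (b j) * X ^ (j : ℕ)) =
      monomial n (c j * x ^ (j : ℕ)) := fun j => by
    rw [aeval_mul, aeval_C, map_pow, aeval_X, monomial_pow, one_mul]
    exact (monomial_mul_monomial _ _ _ _).trans (by rw [Nat.sub_add_cancel j.2.le])
  rw [← aeval_def, map_add, map_sum, Finset.sum_congr rfl fun j _ => hterm j,
    Fin.sum_univ_eq_sum_range (fun j => monomial n (c j * x ^ j)), map_pow, aeval_X, monomial_pow,
    one_mul, ← map_sum, ← map_add, h, map_zero]

theorem mem_intClosure_of_isIntegral_monomial_one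
    (hx : IsIntegral (reesAlgebra I) (monomial 1 x)) : x ∈ I.intClosure := by
  obtain ⟨p, hp, hpx⟩ := hx
  rcases subsingleton_or_nontrivial S with hS | hS
  · exact ⟨1, one_pos, 0, fun _ _ => zero_mem _, Subsingleton.elim _ _⟩
  set n := p.natDegree
  have hn : 0 < n := by
    by_contra! h0
    rw [hp.natDegree_eq_zero.1 (Nat.le_zero.1 h0), eval₂_one] at hpx
    exact one_ne_zero hpx
  refine mem_intClosure_iff_exists_sum_range.2
    ⟨n, hn, fun k => (p.coeff k : S[X]).coeff (n - k), fun k _ => (p.coeff k).2 (n - k), ?_⟩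
  have hcoeff := congrArg (coeff · n) hpx
  simp only [← aeval_def, aeval_eq_sum_range, finsetSum_coeff, coeff_zero] at hcoeff
  have hterm : ∀ k ≤ n, (p.coeff k • monomial 1 x ^ k).coeff n =
      (p.coeff k : S[X]).coeff (n - k) * x ^ k := fun k hk => by
    rw [Subalgebra.smul_def, smul_eq_mul, monomial_pow, one_mul, ← coeff_mul_monomial,
      Nat.sub_add_cancel hk]
  rw [Finset.sum_range_succ, hterm n le_rfl, Nat.sub_self, hp.coeff_natDegree,
    Finset.sum_congr rfl fun k hk => hterm k (Finset.mem_range.1 hk).le] at hcoeff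
  simpa [add_comm] using hcoeff

theorem mem_intClosure_iff_isIntegral_monomial_one :
    x ∈ I.intClosure ↔ IsIntegral (reesAlgebra I) (monomial 1 x) :=
  ⟨isIntegral_monomial_one_of_mem_intClosure, mem_intClosure_of_isIntegral_monomial_one⟩

variable (I) in
def intClosureIdeal : Ideal S where
  carrier := I.intClosure
  zero_mem' := ⟨1, one_pos, 0, fun _ _ => zero_mem _, by simp⟩
  add_mem' {x y} hx hy := by
    simp only [mem_intClosure_iff_isIntegral_monomial_one, map_add] at hx hy ⊢
    exact hx.add hy
  smul_mem' s x hx := by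
    simp only [mem_intClosure_iff_isIntegral_monomial_one, smul_eq_mul,
      ← C_mul_monomial] at hx ⊢
    exact (isIntegral_algebraMap (x := (⟨C s, (reesAlgebra I).algebraMap_mem s⟩ :
      reesAlgebra I))).mul hx

theorem map_mem_intClosure {T : Type*} [CommRing T] (f : S →+* T) {J : Ideal T}
    (hIJ : I.map f ≤ J) (hx : x ∈ I.intClosure) : f x ∈ J.intClosure := by
  obtain ⟨n, hn, a, ha, h⟩ := hx
  refine ⟨n, hn, f ∘ a, fun i hi => ?_, by simpa using congrArg f h⟩
  exact (Ideal.pow_right_mono hIJ i) (Ideal.map_pow f I i ▸ Ideal.mem_map_of_mem f (ha i hi))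

end Ideal

variable (R A B : Type*) [CommRing R] [CommRing A] [CommRing B]
  [Algebra R A] [Algebra R B] [Algebra A B] [IsScalarTower R A B]

noncomputable def lipDelta (b : B) : B ⊗[R] B := b ⊗ₜ[R] 1 - 1 ⊗ₜ[R] b

noncomputable def lipPhi : B ⊗[R] B →ₐ[R] B ⊗[A] B :=
  Algebra.TensorProduct.lift
    ((Algebra.TensorProduct.includeLeft : B →ₐ[A] B ⊗[A] B).restrictScalars R)
    ((Algebra.TensorProduct.includeRight : B →ₐ[A] B ⊗[A] B).restrictScalars R)
    (fun _ _ => Commute.all _ _)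

/-- The relative Lipschitz saturation of `A` in `B` over `R`. -/
noncomputable def lipSat : Set B :=
  {x | lipDelta R B x ∈ (RingHom.ker (lipPhi R A B)).intClosure}

section LipschitzSaturation

open Algebra.TensorProduct

noncomputable def lipDeltaLinear : B →ₗ[R] B ⊗[R] B :=
  includeLeft.toLinearMap - includeRight.toLinearMap

noncomputable def lipSatSubmodule : Submodule R B :=
  ((RingHom.ker (lipPhi R A B)).intClosureIdeal.restrictScalars R).comap (lipDeltaLinear R B)

theorem lipPhi_tmul (x y : B) : lipPhi R A B (x ⊗ₜ[R] y) = x ⊗ₜ[A] y := by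
  simp [lipPhi]

theorem lipPhi_lipDelta_algebraMap (a : A) :
    lipPhi R A B (lipDelta R B (algebraMap A B a)) = 0 := by
  rw [lipDelta, map_sub, lipPhi_tmul, lipPhi_tmul, Algebra.algebraMap_eq_smul_one,
    TensorProduct.smul_tmul, sub_self]

theorem ker_lipPhi_eq_span :
    RingHom.ker (lipPhi R A B) =
      Ideal.span (Set.range fun a => lipDelta R B (algebraMap A B a)) := by
  set J := Ideal.span (Set.range fun a => lipDelta R B (algebraMap A B a))
  refine le_antisymm ?_ (Ideal.span_le.2 ?_)
  · let β₂ : B →ₐ[A] (B ⊗[R] B) ⧸ J :=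
      { (Ideal.Quotient.mk J).comp includeRight.toRingHom with
        commutes' a := by
          refine (Ideal.Quotient.eq.2 ?_).trans (Ideal.Quotient.mkₐ_eq_mk A J ▸
            (Ideal.Quotient.mkₐ A J).commutes a)
          rw [← neg_mem_iff, neg_sub]
          exact Ideal.subset_span ⟨a, rfl⟩ }
    let β : B ⊗[A] B →ₐ[A] (B ⊗[R] B) ⧸ J :=
      lift ((Ideal.Quotient.mkₐ A J).comp includeLeft) β₂ fun _ _ => Commute.all _ _
    -- `β` inverts `lipPhi` modulo `J`.
    have hβ : (β.restrictScalars R).comp (lipPhi R A B) = Ideal.Quotient.mkₐ R J :=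
      ext' fun x y => by simp [β, β₂, lipPhi_tmul, ← map_mul]
    intro w hw
    rw [← Ideal.Quotient.eq_zero_iff_mem, ← Ideal.Quotient.mkₐ_eq_mk R, ← hβ]
    simp [(RingHom.mem_ker).1 hw]
  · rintro _ ⟨a, rfl⟩
    exact lipPhi_lipDelta_algebraMap R A B a

variable {R A B} {R' A' B' : Type*} [CommRing R'] [CommRing A'] [CommRing B'] [Algebra R' A']
  [Algebra R' B'] [Algebra A' B'] [IsScalarTower R' A' B'] [Algebra R R'] [Algebra R B']
  [IsScalarTower R R' B']

theorem lipDelta_map (φ : B →ₐ[R] B') (x : B) :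
    (lipPhi R R' B').comp (map φ φ) (lipDelta R B x) = lipDelta R' B' (φ x) := by
  simp [lipDelta, lipPhi_tmul]

theorem map_ker_lipPhi_le (φ : B →ₐ[R] B')
    (hφ : ∀ a : A, ∃ a' : A', φ (algebraMap A B a) = algebraMap A' B' a') :
    (RingHom.ker (lipPhi R A B)).map ((lipPhi R R' B').comp (map φ φ)) ≤
      RingHom.ker (lipPhi R' A' B') := by
  rw [ker_lipPhi_eq_span, Ideal.map_span, Ideal.span_le]
  rintro _ ⟨_, ⟨a, rfl⟩, rfl⟩
  obtain ⟨a', ha'⟩ := hφ a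
  rw [SetLike.mem_coe, RingHom.mem_ker, lipDelta_map, ha', lipPhi_lipDelta_algebraMap]

theorem map_mem_lipSat (φ : B →ₐ[R] B')
    (hφ : ∀ a : A, ∃ a' : A', φ (algebraMap A B a) = algebraMap A' B' a') {x : B}
    (hx : x ∈ lipSat R A B) : φ x ∈ lipSat R' A' B' := by
  have := Ideal.map_mem_intClosure ((lipPhi R R' B').comp (map φ φ)).toRingHom
    (map_ker_lipPhi_le φ hφ) hx
  rwa [AlgHom.toRingHom_eq_coe, RingHom.coe_coe, lipDelta_map] at this

end LipschitzSaturation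

attribute [local instance] Algebra.TensorProduct.rightAlgebra

theorem lipSat_flat_base_change (R' : Type*) [CommRing R'] [Algebra R R']
    [Algebra (A ⊗[R] R') (B ⊗[R] R')]
    (halg : algebraMap (A ⊗[R] R') (B ⊗[R] R') =
      (Algebra.TensorProduct.map (IsScalarTower.toAlgHom R A B)
        (AlgHom.id R R')).toRingHom)
    (htower : ∀ r : R', algebraMap R' (B ⊗[R] R') r =
      algebraMap (A ⊗[R] R') (B ⊗[R] R') (algebraMap R' (A ⊗[R] R') r)) :
    ∀ z ∈ Submodule.span R'
        {w : B ⊗[R] R' | ∃ x ∈ lipSat R A B, ∃ y : R', w = x ⊗ₜ[R] y},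
      z ∈ @lipSat R' (A ⊗[R] R') (B ⊗[R] R') _ _ _ _ _ _
        (IsScalarTower.of_algebraMap_eq htower) := by
  have := IsScalarTower.of_algebraMap_eq htower
  have hincl : ∀ a : A, ∃ a' : A ⊗[R] R',
      Algebra.TensorProduct.includeLeft (S := R) (B := R') (algebraMap A B a) =
      algebraMap (A ⊗[R] R') (B ⊗[R] R') a' :=
    fun a => ⟨a ⊗ₜ 1, by rw [halg]; rfl⟩
  intro z hz
  refine (Submodule.span_le (p := lipSatSubmodule R' _ _)).2 ?_ hz
  rintro _ ⟨x, hx, y, rfl⟩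
  have hxy : x ⊗ₜ[R] y = y • Algebra.TensorProduct.includeLeft (S := R) (B := R') x := by
    rw [Algebra.smul_def, Algebra.TensorProduct.right_algebraMap_apply,
      Algebra.TensorProduct.includeLeft_apply, Algebra.TensorProduct.tmul_mul_tmul, one_mul,
      mul_one]
  rw [hxy]
  exact Submodule.smul_mem _ y (map_mem_lipSat _ hincl hx)
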